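/- arXiv:0902.3073 — 8 statements merged into one kernel-verified Lean document; each statement's English description precedes it below -/
import Mathlib

section
/- The function x ↦ Γ(x+α)/Γ(x+β) is strictly increasing on (0,∞) whenever α > β ≥ 0. -/
/-!
`log ∘ Γ` is strictly convex on `(0, ∞)`: it is the convex `x ↦ log Γ(x + 1)` plus the strictly
convex `-log`. A strictly convex function has strictly increasing increments over a fixed step, so
`log Γ(x + α) - log Γ(x + β)` is strictly increasing, and the ratio is its exponential.
-/

open Real Set

theorem StrictConvexOn.strictMonoOn_sub_comp_add {𝕜 : Type*} [Field 𝕜] [LinearOrder 𝕜]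
    [IsStrictOrderedRing 𝕜] {s : Set 𝕜} {f : 𝕜 → 𝕜} (hf : StrictConvexOn 𝕜 s f) {α β : 𝕜}
    (hβα : β < α) :
    StrictMonoOn (fun x => f (x + α) - f (x + β)) {x | x + β ∈ s ∧ x + α ∈ s} := by
  rintro x ⟨hxβ, hxα⟩ y ⟨hyβ, hyα⟩ hxy
  have hgap : 0 < α - β := sub_pos.2 hβα
  -- slope on `[x + β, x + α]` < slope on `[x + β, y + α]` < slope on `[y + β, y + α]`
  have left := hf.secant_strict_mono hxβ hxα hyα (by linarith) (by linarith)
    (add_lt_add_left hxy α)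
  have right := hf.secant_strict_mono hyα hxβ hyβ (by linarith) (by linarith)
    (add_lt_add_left hxy β)
  have hdiag : (f (y + α) - f (x + β)) / (y + α - (x + β))
      = (f (x + β) - f (y + α)) / (x + β - (y + α)) := by
    rw [← neg_sub, ← neg_sub (x + β), neg_div_neg_eq]
  have slopes := left.trans (hdiag ▸ right)
  rwa [show x + α - (x + β) = α - β by ring, show y + β - (y + α) = -(α - β) by ring,
    div_neg, ← neg_div, neg_sub, div_lt_div_iff_of_pos_right hgap] at slopes

theorem Real.strictConvexOn_log_Gamma : StrictConvexOn ℝ (Ioi 0) (log ∘ Gamma) := by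
  have hshift : ConvexOn ℝ (Ioi 0) fun x => log (Gamma (x + 1)) :=
    (convexOn_log_Gamma.translate_left 1).subset (fun x (hx : 0 < x) => by
      simp only [mem_preimage, mem_Ioi]; linarith) (convex_Ioi 0)
  refine (hshift.add_strictConvexOn strictConcaveOn_log_Ioi.neg).congr fun x (hx : 0 < x) => ?_
  simp only [Pi.add_apply, Pi.neg_apply, Function.comp_apply, Gamma_add_one hx.ne',
    log_mul hx.ne' (Gamma_pos_of_pos hx).ne']
  ring

theorem stmt_2 (α β : ℝ) (hβ : 0 ≤ β) (hαβ : β < α) :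
    StrictMonoOn (fun x : ℝ => Real.Gamma (x + α) / Real.Gamma (x + β)) (Set.Ioi 0) := by
  have hdom : Ioi 0 ⊆ {x | x + β ∈ Ioi 0 ∧ x + α ∈ Ioi 0} := fun x (hx : 0 < x) =>
    ⟨show 0 < x + β by linarith, show 0 < x + α by linarith⟩
  refine (exp_strictMono.comp_strictMonoOn
    ((strictConvexOn_log_Gamma.strictMonoOn_sub_comp_add hαβ).mono hdom)).congr
    fun x hx => ?_
  obtain ⟨hxβ, hxα⟩ := hdom hx
  simp only [Function.comp_apply, exp_sub, exp_log (Gamma_pos_of_pos hxβ),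
    exp_log (Gamma_pos_of_pos hxα)]
end

section
/- Suppose b > a > 0 and δ > 0. Then for all integers m ≥ 0 and 0 ≤ k ≤ m/2, the quantity M_k := Γ(a+δ+k)Γ(b+m−k) + [if k < m−k] Γ(a+δ+m−k)Γ(b+k) − Γ(a+k)Γ(b+δ+m−k) − [if k < m−k] Γ(a+m−k)Γ(b+δ+k) is strictly negative (for k = m−k, M_k = Γ(a+δ+k)Γ(b+m−k) − Γ(a+k)Γ(b+δ+m−k) < 0). -/
/-!
All four products `Γ(p) Γ(q)` in the inequality have the same `p + q`, so they are values of the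
functions `t ↦ Γ(p + t) Γ(q - t)`, which are strictly convex because `log Γ` is. Writing `φ` for the
sum of the two such functions through the products on the left, the left side is `φ 0`, while
`φ (-δ)` and `φ (b - a)` both equal the right side; strict convexity gives `φ 0 < φ (b - a)`.
-/

open Real Set

theorem StrictConvexOn.comp_sub_left {𝕜 E β : Type*} [Ring 𝕜] [PartialOrder 𝕜] [AddCommGroup E]
    [Module 𝕜 E] [AddCommMonoid β] [PartialOrder β] [SMul 𝕜 β] {s : Set E} {f : E → β}
    (hf : StrictConvexOn 𝕜 s f) (c : E) :
    StrictConvexOn 𝕜 ((c - ·) ⁻¹' s) (fun z => f (c - z)) := by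
  have combo : ∀ {x y : E} {a b : 𝕜}, a + b = 1 →
      c - (a • x + b • y) = a • (c - x) + b • (c - y) := fun hab => by
    rw [smul_sub, smul_sub, sub_add_sub_comm, Convex.combo_self hab]
  refine ⟨fun x hx y hy a b ha hb hab => ?_, fun x hx y hy hxy a b ha hb hab => ?_⟩
  · simpa only [mem_preimage, combo hab] using hf.1 hx hy ha hb hab
  · simpa only [combo hab] using hf.2 hx hy (sub_right_injective.ne hxy) ha hb hab

theorem StrictConvexOn.exp {E : Type*} [AddCommMonoid E] [Module ℝ E] {s : Set E} {f : E → ℝ}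
    (hf : StrictConvexOn ℝ s f) : StrictConvexOn ℝ s fun x => rexp (f x) :=
  ⟨hf.1, fun x hx y hy hxy a b ha hb hab =>
    calc rexp (f (a • x + b • y)) < rexp (a • f x + b • f y) :=
        exp_lt_exp.2 (hf.2 hx hy hxy ha hb hab)
      _ ≤ a • rexp (f x) + b • rexp (f y) :=
        convexOn_exp.2 (mem_univ _) (mem_univ _) ha.le hb.le hab⟩

namespace Real

/-- `log Γ(x) = log Γ(x + 1) - log x`, convex plus strictly convex. -/
theorem strictConvexOn_log_Gamma_s6 : StrictConvexOn ℝ (Ioi 0) (log ∘ Gamma) := by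
  have hshift : ConvexOn ℝ (Ioi 0) fun x => log (Gamma (1 + x)) :=
    (convexOn_log_Gamma.translate_right 1).subset
      (fun x (hx : 0 < x) => show (0 : ℝ) < 1 + x by linarith) (convex_Ioi 0)
  refine (hshift.add_strictConvexOn strictConcaveOn_log_Ioi.neg).congr fun x (hx : 0 < x) => ?_
  simp only [Pi.add_apply, Pi.neg_apply, Function.comp_apply, add_comm 1 x,
    Gamma_add_one hx.ne', log_mul hx.ne' (Gamma_pos_of_pos hx).ne']
  ring

theorem strictConvexOn_Gamma_add_mul_Gamma_sub (p q : ℝ) :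
    StrictConvexOn ℝ (Ioo (-p) q) fun t => Gamma (p + t) * Gamma (q - t) := by
  have hleft : StrictConvexOn ℝ (Ioo (-p) q) fun t => log (Gamma (p + t)) :=
    (strictConvexOn_log_Gamma_s6.translate_right p).subset
      (fun t (ht : -p < t ∧ t < q) => show 0 < p + t by linarith) (convex_Ioo _ _)
  have hright : StrictConvexOn ℝ (Ioo (-p) q) fun t => log (Gamma (q - t)) :=
    (strictConvexOn_log_Gamma_s6.comp_sub_left q).subset
      (fun t (ht : -p < t ∧ t < q) => show 0 < q - t by linarith) (convex_Ioo _ _)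
  refine (hleft.add hright).exp.congr fun t ⟨htp, htq⟩ => ?_
  simp only [Pi.add_apply]
  rw [exp_add, exp_log (Gamma_pos_of_pos (by linarith)), exp_log (Gamma_pos_of_pos (by linarith))]

theorem Gamma_mul_Gamma_add_Gamma_mul_Gamma_lt {a b δ k l : ℝ} (hak : 0 < a + k) (hal : 0 < a + l)
    (hab : a < b) (hδ : 0 < δ) :
    Gamma (a + δ + k) * Gamma (b + l) + Gamma (a + δ + l) * Gamma (b + k) <
      Gamma (a + k) * Gamma (b + δ + l) + Gamma (a + l) * Gamma (b + δ + k) := by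
  set φ : ℝ → ℝ := fun t =>
    Gamma (a + δ + k + t) * Gamma (b + l - t) + Gamma (a + δ + l + t) * Gamma (b + k - t)
  have hφ : StrictConvexOn ℝ (Icc (-δ) (b - a)) φ := by
    refine ((strictConvexOn_Gamma_add_mul_Gamma_sub _ _).subset ?_ (convex_Icc _ _)).add
      ((strictConvexOn_Gamma_add_mul_Gamma_sub _ _).subset ?_ (convex_Icc _ _)) <;>
    exact fun t ⟨h₁, h₂⟩ => ⟨by linarith, by linarith⟩
  have hlt : φ 0 < max (φ (-δ)) (φ (b - a)) :=
    hφ.lt_on_openSegment (left_mem_Icc.2 (by linarith)) (right_mem_Icc.2 (by linarith))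
      (by linarith) (by rw [openSegment_eq_Ioo (by linarith)]; exact ⟨by linarith, by linarith⟩)
  have hφ₀ : φ 0 = Gamma (a + δ + k) * Gamma (b + l) + Gamma (a + δ + l) * Gamma (b + k) := by
    simp only [φ, add_zero, sub_zero]
  have hφδ : φ (-δ) = Gamma (a + k) * Gamma (b + δ + l) + Gamma (a + l) * Gamma (b + δ + k) := by
    simp only [φ]; ring_nf
  have hφba : φ (b - a) = φ (-δ) := by
    simp only [φ]; ring_nf
  rwa [hφba, max_self, hφ₀, hφδ] at hlt

end Real

theorem stmt_6_general (a b δ : ℝ) (ha : 0 < a) (hab : a < b) (hδ : 0 < δ)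
    (m k : ℕ) :
    (2 * k < m →
      Real.Gamma (a + δ + k) * Real.Gamma (b + (m - k : ℕ)) +
        Real.Gamma (a + δ + (m - k : ℕ)) * Real.Gamma (b + k) -
        Real.Gamma (a + k) * Real.Gamma (b + δ + (m - k : ℕ)) -
        Real.Gamma (a + (m - k : ℕ)) * Real.Gamma (b + δ + k) < 0) ∧
    (2 * k = m →
      Real.Gamma (a + δ + k) * Real.Gamma (b + (m - k : ℕ)) -
        Real.Gamma (a + k) * Real.Gamma (b + δ + (m - k : ℕ)) < 0) := by
  have key (l : ℕ) := Real.Gamma_mul_Gamma_add_Gamma_mul_Gamma_lt (k := (k : ℝ)) (l := (l : ℝ))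
    (by positivity) (by positivity) hab hδ
  refine ⟨fun _ => by linarith [key (m - k)], fun hm => ?_⟩
  rw [show m - k = k by omega]
  linarith [key k]

theorem stmt_6 (a b δ : ℝ) (ha : 0 < a) (hab : a < b) (hδ : 0 < δ)
    (m k : ℕ) (hk : 2 * k ≤ m) :
    (2 * k < m →
      Real.Gamma (a + δ + k) * Real.Gamma (b + (m - k : ℕ)) +
        Real.Gamma (a + δ + (m - k : ℕ)) * Real.Gamma (b + k) -
        Real.Gamma (a + k) * Real.Gamma (b + δ + (m - k : ℕ)) -
        Real.Gamma (a + (m - k : ℕ)) * Real.Gamma (b + δ + k) < 0) ∧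
    (2 * k = m →
      Real.Gamma (a + δ + k) * Real.Gamma (b + (m - k : ℕ)) -
        Real.Gamma (a + k) * Real.Gamma (b + δ + (m - k : ℕ)) < 0) :=
  stmt_6_general a b δ ha hab hδ m k
end

section
/- Suppose b > a > 0, δ > 0, m ≥ 1 an integer, and 0 ≤ k ≤ m/2. Then 1/[(a+δ)_k (b)_{m−k}] + 1/[(a+δ)_{m−k} (b)_k] − 1/[(a)_{m−k} (b+δ)_k] − 1/[(a)_k (b+δ)_{m−k}] < 0 when k < m−k, and 1/[(a+δ)_k (b)_{m−k}] − 1/[(a)_k (b+δ)_{m−k}] < 0 when k = m−k. -/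
/-!
Write `m - k = k + d` and split `(x)_{k+d} = (x)_k (x+k)_d`. Factor by factor,
`(a)_k (b+δ)_k ≤ (a+δ)_k (b)_k`, so the first claim reduces to
`1/(b+k)_d - 1/(b+k+δ)_d < 1/(a+k)_d - 1/(a+k+δ)_d`, i.e. to `x ↦ 1/(x)_d - 1/(x+δ)_d` being
strictly decreasing on `x > 0` when `d ≥ 1`. That follows by induction on `d` from the product rule
`f g - f' g' = (f - f') g + f' (g - g')`, since `1/(x)_{d+1} = 1/(x+d) · 1/(x)_d`.
When `k = m - k ≥ 1` the claim is the factorwise inequality itself, which is then strict.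
-/

/-- Pochhammer symbol (rising factorial) for real argument. -/
def poch (a : ℝ) (n : ℕ) : ℝ := ∏ i ∈ Finset.range n, (a + i)

open Set

lemma StrictAntiOn.mul_sub_shift {f g : ℝ → ℝ} {δ : ℝ} (hδ : 0 < δ)
    (hf₀ : ∀ x ∈ Ioi (0 : ℝ), 0 ≤ f x) (hg₀ : ∀ x ∈ Ioi (0 : ℝ), 0 < g x)
    (hf : AntitoneOn f (Ioi 0)) (hg : AntitoneOn g (Ioi 0))
    (hf' : StrictAntiOn (fun x => f x - f (x + δ)) (Ioi 0))
    (hg' : AntitoneOn (fun x => g x - g (x + δ)) (Ioi 0)) :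
    StrictAntiOn (fun x => f x * g x - f (x + δ) * g (x + δ)) (Ioi 0) := by
  intro x hx y hy hxy
  have hxδ : x + δ ∈ Ioi (0 : ℝ) := mem_Ioi.2 (by linarith [mem_Ioi.1 hx])
  have hyδ : y + δ ∈ Ioi (0 : ℝ) := mem_Ioi.2 (by linarith [mem_Ioi.1 hy])
  have hfx : 0 ≤ f x - f (x + δ) := sub_nonneg.2 (hf hx hxδ (by linarith))
  have hgy : 0 ≤ g y - g (y + δ) := sub_nonneg.2 (hg hy hyδ (by linarith))
  have first : (f y - f (y + δ)) * g y < (f x - f (x + δ)) * g x :=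
    mul_lt_mul (hf' hx hy hxy) (hg hx hy hxy.le) (hg₀ y hy) hfx
  have second : f (y + δ) * (g y - g (y + δ)) ≤ f (x + δ) * (g x - g (x + δ)) :=
    mul_le_mul (hf hxδ hyδ (by linarith)) (hg' hx hy hxy.le) hgy (hf₀ _ hxδ)
  linear_combination first + second

lemma one_div_add_sub_shift_strictAntiOn {δ c : ℝ} (hδ : 0 < δ) (hc : 0 ≤ c) :
    StrictAntiOn (fun x => 1 / (x + c) - 1 / (x + δ + c)) (Ioi 0) := by
  intro x (hx : 0 < x) y _ hxy
  have hsub : ∀ z, 0 < z → 1 / (z + c) - 1 / (z + δ + c) = δ / ((z + c) * (z + δ + c)) := by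
    intro z hz
    field_simp
    ring
  simp only
  rw [hsub x hx, hsub y (by linarith)]
  apply div_lt_div_of_pos_left hδ (by positivity)
  gcongr

lemma poch_pos {x : ℝ} (hx : 0 < x) (n : ℕ) : 0 < poch x n :=
  Finset.prod_pos fun i _ => by positivity

lemma poch_le_poch {x y : ℝ} (hx : 0 ≤ x) (hxy : x ≤ y) (n : ℕ) : poch x n ≤ poch y n :=
  Finset.prod_le_prod (fun i _ => by positivity) fun i _ => by linarith

lemma poch_add (x : ℝ) (k d : ℕ) : poch x (k + d) = poch x k * poch (x + k) d := by
  simp only [poch, Finset.prod_range_add, Nat.cast_add, add_assoc]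

lemma one_div_poch_succ (x : ℝ) (n : ℕ) : 1 / poch x (n + 1) = 1 / (x + n) * (1 / poch x n) := by
  rw [poch, Finset.prod_range_succ, ← poch, mul_comm, one_div_mul_one_div]

lemma one_div_poch_antitoneOn (n : ℕ) : AntitoneOn (fun x => 1 / poch x n) (Ioi 0) :=
  fun _ hx _ _ hxy => one_div_le_one_div_of_le (poch_pos hx n) (poch_le_poch hx.le hxy n)

lemma one_div_poch_sub_shift_strictAntiOn {δ : ℝ} (hδ : 0 < δ) (d : ℕ) :
    StrictAntiOn (fun x => 1 / poch x (d + 1) - 1 / poch (x + δ) (d + 1)) (Ioi 0) := by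
  simp only [one_div_poch_succ]
  refine StrictAntiOn.mul_sub_shift (f := fun x => 1 / (x + d)) (g := fun x => 1 / poch x d) hδ
    (fun x (hx : 0 < x) => by positivity) (fun x hx => one_div_pos.2 (poch_pos hx d))
    (fun x (hx : 0 < x) y _ hxy => one_div_le_one_div_of_le (by positivity) (by linarith))
    (one_div_poch_antitoneOn d) (one_div_add_sub_shift_strictAntiOn hδ d.cast_nonneg) ?_
  cases d with
  | zero => simpa [poch] using antitoneOn_const
  | succ d => exact (one_div_poch_sub_shift_strictAntiOn hδ d).antitoneOn

lemma poch_mul_poch_add_le {x y δ : ℝ} (hx : 0 ≤ x) (hxy : x ≤ y) (hδ : 0 ≤ δ) (n : ℕ) :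
    poch x n * poch (y + δ) n ≤ poch (x + δ) n * poch y n := by
  have hy : 0 ≤ y := hx.trans hxy
  simp only [poch, ← Finset.prod_mul_distrib]
  exact Finset.prod_le_prod (fun i _ => by positivity) fun i _ => by nlinarith

lemma poch_mul_poch_add_lt {x y δ : ℝ} (hx : 0 < x) (hxy : x < y) (hδ : 0 < δ) {n : ℕ}
    (hn : n ≠ 0) : poch x n * poch (y + δ) n < poch (x + δ) n * poch y n := by
  have hy : 0 < y := hx.trans hxy
  simp only [poch, ← Finset.prod_mul_distrib]
  exact Finset.prod_lt_prod_of_nonempty (fun i _ => by positivity) (fun i _ => by nlinarith)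
    (Finset.nonempty_range_iff.2 hn)

lemma cross_sum_sub_neg {a b δ : ℝ} (ha : 0 < a) (hab : a < b) (hδ : 0 < δ) (k d : ℕ) :
    1 / (poch (a + δ) k * poch b (k + d + 1)) + 1 / (poch (a + δ) (k + d + 1) * poch b k) -
      1 / (poch a (k + d + 1) * poch (b + δ) k) - 1 / (poch a k * poch (b + δ) (k + d + 1))
      < 0 := by
  have hb : 0 < b := ha.trans hab
  have hak : (0 : ℝ) < a + k := by positivity
  have hpQ : 0 < poch a k * poch (b + δ) k := mul_pos (poch_pos ha k) (poch_pos (by positivity) k)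
  have head := one_div_le_one_div_of_le hpQ (poch_mul_poch_add_le ha.le hab.le hδ.le k)
  simp only [add_assoc k, poch_add _ k (d + 1), add_right_comm _ δ (k : ℝ)]
  set T := poch (b + k) (d + 1)
  set T' := poch (b + k + δ) (d + 1)
  set R := poch (a + k) (d + 1)
  set R' := poch (a + k + δ) (d + 1)
  have hT : 0 < T := poch_pos (by positivity) _
  have hR' : 0 < R' := poch_pos (by positivity) _
  have tail : 1 / T - 1 / T' < 1 / R - 1 / R' :=
    one_div_poch_sub_shift_strictAntiOn hδ d hak (show 0 < b + k by positivity) (by linarith)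
  calc _ = 1 / (poch (a + δ) k * poch b k) * (1 / T + 1 / R') -
        1 / (poch a k * poch (b + δ) k) * (1 / R + 1 / T') := by ring
    _ < 0 := sub_neg.2 <| calc
        _ ≤ 1 / (poch a k * poch (b + δ) k) * (1 / T + 1 / R') :=
          mul_le_mul_of_nonneg_right head (by positivity)
        _ < _ := mul_lt_mul_of_pos_left (by linarith) (one_div_pos.2 hpQ)

theorem stmt_7_general (a b δ : ℝ) (ha : 0 < a) (hab : a < b) (hδ : 0 < δ)
    (m k : ℕ) (hm : 1 ≤ m) :
    (2 * k < m →
      1 / (poch (a + δ) k * poch b (m - k)) + 1 / (poch (a + δ) (m - k) * poch b k) -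
        1 / (poch a (m - k) * poch (b + δ) k) - 1 / (poch a k * poch (b + δ) (m - k)) < 0) ∧
    (2 * k = m →
      1 / (poch (a + δ) k * poch b (m - k)) - 1 / (poch a k * poch (b + δ) (m - k)) < 0) := by
  constructor
  · intro hlt
    obtain ⟨d, hd⟩ : ∃ d, m - k = k + d + 1 := ⟨m - 2 * k - 1, by omega⟩
    rw [hd]
    exact cross_sum_sub_neg ha hab hδ k d
  · intro heq
    rw [show m - k = k by omega, sub_neg]
    exact one_div_lt_one_div_of_lt
      (mul_pos (poch_pos ha k) (poch_pos (by linarith) k))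
      (poch_mul_poch_add_lt ha hab hδ (by omega))

theorem stmt_7 (a b δ : ℝ) (ha : 0 < a) (hab : a < b) (hδ : 0 < δ)
    (m k : ℕ) (hm : 1 ≤ m) (hk : 2 * k ≤ m) :
    (2 * k < m →
      1 / (poch (a + δ) k * poch b (m - k)) + 1 / (poch (a + δ) (m - k) * poch b k) -
        1 / (poch a (m - k) * poch (b + δ) k) - 1 / (poch a k * poch (b + δ) (m - k)) < 0) ∧
    (2 * k = m →
      1 / (poch (a + δ) k * poch b (m - k)) - 1 / (poch a k * poch (b + δ) (m - k)) < 0) :=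
  stmt_7_general a b δ ha hab hδ m k hm
end

section
/- Let A(x) = Σ_{k=0}^n a_k x^k and B(x) = Σ_{k=0}^n b_k x^k be polynomials with all a_k, b_k > 0. If a_n/b_n ≥ a_{n−1}/b_{n−1} ≥ ⋯ ≥ a_0/b_0, then every coefficient of the polynomial A'(x)B(x) − B'(x)A(x) is nonnegative. If moreover A and B are not proportional... (at least one inequality strict with the chain condition), then A'(x)B(x) − B'(x)A(x) > 0 for all x > 0. -/
/-!
Multiplying the Wronskian-type polynomial `A' B - B' A` by `X`, its coefficient of `X ^ N` is
`∑_{i + j = N} (i - j) a_i b_j`; pairing `(i, j)` with `(j, i)` turns twice this sum into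
`∑_{i + j = N} (i - j) (a_i b_j - a_j b_i)`, and every summand is nonnegative because the ratios
`a_k / b_k` increase. A strict step `a_{k-1} b_k < a_k b_{k-1}` makes the summand `(k, k - 1)`
positive, so one coefficient is positive and the polynomial is positive on `(0, ∞)`.
-/

open Polynomial Finset

namespace Polynomial

variable {R : Type*}

theorem coeff_sum_range_C_mul_X_pow [Semiring R] (c : ℕ → R) (n m : ℕ) :
    (∑ k ∈ range n, C (c k) * X ^ k).coeff m = if m < n then c m else 0 := by
  simp

theorem eval_pos_of_coeff_nonneg [CommSemiring R] [LinearOrder R] [IsStrictOrderedRing R]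
    {p : R[X]} (hp : ∀ m, 0 ≤ p.coeff m) {k : ℕ} (hk : 0 < p.coeff k) {x : R} (hx : 0 < x) :
    0 < p.eval x := by
  rw [eval_eq_sum_range]
  refine sum_pos' (fun i _ => mul_nonneg (hp i) (pow_nonneg hx.le i)) ⟨k, ?_, ?_⟩
  · exact mem_range.2 (Nat.lt_succ_of_le (le_natDegree_of_ne_zero hk.ne'))
  · exact mul_pos hk (pow_pos hx k)

section Wronskian

variable [CommRing R]

theorem coeff_X_mul_derivative (p : R[X]) (i : ℕ) :
    (X * derivative p).coeff i = i * p.coeff i := by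
  cases i with
  | zero => simp
  | succ i => rw [coeff_X_mul, coeff_derivative, mul_comm, Nat.cast_succ]

theorem coeff_X_mul_wronskian (a b : R[X]) (N : ℕ) :
    (X * wronskian a b).coeff N =
      ∑ x ∈ antidiagonal N, ((x.2 : R) - x.1) * (a.coeff x.1 * b.coeff x.2) := by
  have hX : X * wronskian a b = a * (X * derivative b) - (X * derivative a) * b := by
    rw [wronskian]; ring
  rw [hX, coeff_sub, coeff_mul, coeff_mul, ← sum_sub_distrib]
  refine sum_congr rfl fun x _ => ?_
  rw [coeff_X_mul_derivative, coeff_X_mul_derivative]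
  ring

theorem two_mul_coeff_X_mul_wronskian (a b : R[X]) (N : ℕ) :
    2 * (X * wronskian a b).coeff N =
      ∑ x ∈ antidiagonal N,
        ((x.2 : R) - x.1) * (a.coeff x.1 * b.coeff x.2 - a.coeff x.2 * b.coeff x.1) := by
  rw [two_mul]
  conv_lhs => arg 2; rw [coeff_X_mul_wronskian, ← Nat.sum_antidiagonal_swap]
  rw [coeff_X_mul_wronskian, ← sum_add_distrib]
  refine sum_congr rfl fun x _ => ?_
  simp only [Prod.fst_swap, Prod.snd_swap]
  ring

end Wronskian

section OrderedWronskian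

variable [CommRing R] [LinearOrder R] [IsStrictOrderedRing R]

theorem wronskian_summand_nonneg {a b : R[X]}
    (h : ∀ i j, i ≤ j → a.coeff j * b.coeff i ≤ a.coeff i * b.coeff j) (i j : ℕ) :
    0 ≤ ((j : R) - i) * (a.coeff i * b.coeff j - a.coeff j * b.coeff i) := by
  rcases le_total i j with hij | hji
  · exact mul_nonneg (sub_nonneg.2 (Nat.cast_le.2 hij)) (sub_nonneg.2 (h i j hij))
  · exact mul_nonneg_of_nonpos_of_nonpos (sub_nonpos.2 (Nat.cast_le.2 hji))
      (sub_nonpos.2 (h j i hji))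

theorem coeff_wronskian_nonneg {a b : R[X]}
    (h : ∀ i j, i ≤ j → a.coeff j * b.coeff i ≤ a.coeff i * b.coeff j) (m : ℕ) :
    0 ≤ (wronskian a b).coeff m := by
  have h2 : 0 ≤ 2 * (X * wronskian a b).coeff (m + 1) := by
    rw [two_mul_coeff_X_mul_wronskian]
    exact sum_nonneg fun x _ => wronskian_summand_nonneg h x.1 x.2
  rw [coeff_X_mul] at h2
  linarith

theorem coeff_wronskian_pos {a b : R[X]}
    (h : ∀ i j, i ≤ j → a.coeff j * b.coeff i ≤ a.coeff i * b.coeff j) {k : ℕ}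
    (hk : a.coeff (k + 1) * b.coeff k < a.coeff k * b.coeff (k + 1)) :
    0 < (wronskian a b).coeff (2 * k) := by
  have h2 : 0 < 2 * (X * wronskian a b).coeff (2 * k + 1) := by
    rw [two_mul_coeff_X_mul_wronskian]
    refine sum_pos' (fun x _ => wronskian_summand_nonneg h x.1 x.2)
      ⟨(k, k + 1), mem_antidiagonal.2 (by ring), ?_⟩
    push_cast
    linarith
  rw [coeff_X_mul] at h2
  linarith

end OrderedWronskian

end Polynomial

theorem mul_le_mul_of_consecutive_le {K : Type*} [Field K] [LinearOrder K] [IsStrictOrderedRing K]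
    {a b : ℕ → K} {n : ℕ} (hb : ∀ k ≤ n, 0 < b k)
    (hchain : ∀ k < n, a k * b (k + 1) ≤ a (k + 1) * b k) {i j : ℕ} (hij : i ≤ j)
    (hjn : j ≤ n) :
    a i * b j ≤ a j * b i := by
  set r : ℕ → K := fun k => a (min k n) / b (min k n)
  have hr : Monotone r := monotone_nat_of_le_succ fun k => by
    rcases lt_or_ge k n with hk | hk
    · simp only [r, min_eq_left hk.le, min_eq_left (Nat.succ_le_of_lt hk)]
      rw [div_le_div_iff₀ (hb k hk.le) (hb (k + 1) hk)]
      exact hchain k hk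
    · simp only [r, min_eq_right hk, min_eq_right (hk.trans (Nat.le_succ k)), le_refl]
  have hrij := hr hij
  simp only [r, min_eq_left (hij.trans hjn), min_eq_left hjn] at hrij
  rwa [div_le_div_iff₀ (hb i (hij.trans hjn)) (hb j hjn)] at hrij

theorem stmt_8_general (n : ℕ) (a b : ℕ → ℝ)
    (hb : ∀ k ≤ n, 0 < b k)
    (hchain : ∀ k, 1 ≤ k → k ≤ n → a (k - 1) * b k ≤ a k * b (k - 1))
    (A B : Polynomial ℝ)
    (hA : A = ∑ k ∈ Finset.range (n + 1), Polynomial.C (a k) * Polynomial.X ^ k)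
    (hB : B = ∑ k ∈ Finset.range (n + 1), Polynomial.C (b k) * Polynomial.X ^ k) :
    (∀ m, 0 ≤ (Polynomial.derivative A * B - Polynomial.derivative B * A).coeff m) ∧
    ((∃ k, 1 ≤ k ∧ k ≤ n ∧ a (k - 1) * b k < a k * b (k - 1)) →
      ∀ x : ℝ, 0 < x →
        0 < (Polynomial.derivative A * B - Polynomial.derivative B * A).eval x) := by
  have hW : derivative A * B - derivative B * A = wronskian B A := by rw [wronskian]; ring
  have hAc (m : ℕ) : A.coeff m = if m < n + 1 then a m else 0 :=
    hA ▸ coeff_sum_range_C_mul_X_pow a (n + 1) m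
  have hBc (m : ℕ) : B.coeff m = if m < n + 1 then b m else 0 :=
    hB ▸ coeff_sum_range_C_mul_X_pow b (n + 1) m
  have hcross : ∀ i j, i ≤ j → B.coeff j * A.coeff i ≤ B.coeff i * A.coeff j := by
    intro i j hij
    by_cases hjn : j < n + 1
    · simp only [hAc, hBc, if_pos hjn, if_pos (hij.trans_lt hjn)]
      rw [mul_comm, mul_comm (b i)]
      exact mul_le_mul_of_consecutive_le hb (fun k hk => hchain (k + 1) (by omega) hk)
        hij (by omega)
    · simp [hAc, hBc, hjn]
  rw [hW]
  refine ⟨coeff_wronskian_nonneg hcross, ?_⟩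
  rintro ⟨_ | k, hk1, hkn, hlt⟩ x hx
  · omega
  refine eval_pos_of_coeff_nonneg (coeff_wronskian_nonneg hcross) (k := 2 * k) ?_ hx
  refine coeff_wronskian_pos hcross ?_
  simp only [hAc, hBc, if_pos (show k < n + 1 by omega), if_pos (show k + 1 < n + 1 by omega)]
  simpa [mul_comm] using hlt

theorem stmt_8 (n : ℕ) (a b : ℕ → ℝ)
    (ha : ∀ k ≤ n, 0 < a k) (hb : ∀ k ≤ n, 0 < b k)
    (hchain : ∀ k, 1 ≤ k → k ≤ n → a (k - 1) * b k ≤ a k * b (k - 1))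
    (A B : Polynomial ℝ)
    (hA : A = ∑ k ∈ Finset.range (n + 1), Polynomial.C (a k) * Polynomial.X ^ k)
    (hB : B = ∑ k ∈ Finset.range (n + 1), Polynomial.C (b k) * Polynomial.X ^ k) :
    (∀ m, 0 ≤ (Polynomial.derivative A * B - Polynomial.derivative B * A).coeff m) ∧
    ((∃ k, 1 ≤ k ∧ k ≤ n ∧ a (k - 1) * b k < a k * b (k - 1)) →
      ∀ x : ℝ, 0 < x →
        0 < (Polynomial.derivative A * B - Polynomial.derivative B * A).eval x) :=
  stmt_8_general n a b hb hchain A B hA hB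
end

section
/- Let a_1,…,a_q, b_1,…,b_q be positive reals and let e_m denote the m-th elementary symmetric polynomial. If e_m(b)/e_m(a) ≥ e_{m−1}(b)/e_{m−1}(a) for all m = 1,…,q (with e_0 = 1), then the rational function R(x) = ∏_{k=1}^q (a_k + x) / ∏_{k=1}^q (b_k + x) is monotone increasing on (0,∞). -/
/-!
With `Aₘ = esym q m a` and `Bₘ = esym q m b`, the numerator and denominator at `x` are
`∑ₘ Aₘ x^(q-m)` and `∑ₘ Bₘ x^(q-m)`. For `x ≤ y`, cross-multiplying reduces the claim to
`(∑ Aₘ x^(q-m)) (∑ Bₙ y^(q-n)) ≤ (∑ Aₘ y^(q-m)) (∑ Bₙ x^(q-n))`. Symmetrising in `m, n` turns the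
difference of the two sides into half of `∑ (Aₘ Bₙ - Aₙ Bₘ) (y^(q-m) x^(q-n) - x^(q-m) y^(q-n))`,
and for `m ≤ n` both factors are nonnegative: the first because `Bₘ / Aₘ` increases with `m`,
the second because `x ≤ y`.
-/

/-- `m`-th elementary symmetric polynomial of `c 0, …, c (q-1)`. -/
def esym (q m : ℕ) (c : ℕ → ℝ) : ℝ :=
  ∑ t ∈ (Finset.range q).powersetCard m, ∏ i ∈ t, c i

open Finset

theorem sum_mul_sum_le_of_cross_le {ι : Type*} [LinearOrder ι] (s : Finset ι)
    (A B u v : ι → ℝ)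
    (hAB : ∀ m ∈ s, ∀ n ∈ s, m ≤ n → A n * B m ≤ A m * B n)
    (huv : ∀ m ∈ s, ∀ n ∈ s, m ≤ n → u m * v n ≤ v m * u n) :
    (∑ m ∈ s, A m * u m) * (∑ n ∈ s, B n * v n)
      ≤ (∑ m ∈ s, A m * v m) * (∑ n ∈ s, B n * u n) := by
  set F : ι → ι → ℝ := fun m n => A m * B n * (v m * u n - u m * v n)
  have hF : ∀ m ∈ s, ∀ n ∈ s, 0 ≤ F m n + F n m := by
    intro m hm n hn
    have hsym : F m n + F n m = (A m * B n - A n * B m) * (v m * u n - u m * v n) := by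
      simp only [F]; ring
    rw [hsym]
    rcases le_total m n with h | h
    · exact mul_nonneg (sub_nonneg.2 (hAB m hm n hn h)) (sub_nonneg.2 (huv m hm n hn h))
    · exact mul_nonneg_of_nonpos_of_nonpos (by linarith [hAB n hn m hm h])
        (by linarith [huv n hn m hm h])
  have hsum : 0 ≤ ∑ m ∈ s, ∑ n ∈ s, F m n := by
    have h2 := sum_nonneg fun m hm => sum_nonneg fun n hn => hF m hm n hn
    simp only [sum_add_distrib] at h2
    rw [sum_comm (f := fun m n => F n m)] at h2
    linarith
  have hdiff : (∑ m ∈ s, A m * v m) * (∑ n ∈ s, B n * u n)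
      - (∑ m ∈ s, A m * u m) * (∑ n ∈ s, B n * v n) = ∑ m ∈ s, ∑ n ∈ s, F m n := by
    simp only [sum_mul_sum, ← sum_sub_distrib, F]
    refine sum_congr rfl fun m _ => sum_congr rfl fun n _ => ?_
    ring
  linarith

theorem esym_pos {q m : ℕ} {c : ℕ → ℝ} (hc : ∀ i < q, 0 < c i) (hm : m ≤ q) :
    0 < esym q m c := by
  refine sum_pos (fun t ht => prod_pos fun i hi => hc i ?_) ?_
  · exact mem_range.mp ((mem_powersetCard.mp ht).1 hi)
  · exact powersetCard_nonempty.2 (by simpa using hm)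

theorem prod_add_eq_sum_esym (q : ℕ) (c : ℕ → ℝ) (x : ℝ) :
    ∏ k ∈ range q, (c k + x) = ∑ m ∈ range (q + 1), esym q m c * x ^ (q - m) := by
  rw [prod_add, sum_powerset, card_range]
  refine sum_congr rfl fun m _ => ?_
  rw [esym, sum_mul]
  refine sum_congr rfl fun t ht => ?_
  rw [mem_powersetCard] at ht
  rw [prod_const, card_sdiff_of_subset ht.1, card_range, ht.2]

theorem pow_sub_mul_pow_sub_le {x y : ℝ} (hx : 0 ≤ x) (hxy : x ≤ y) {q m n : ℕ}
    (hmn : m ≤ n) (hnq : n ≤ q) :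
    x ^ (q - m) * y ^ (q - n) ≤ y ^ (q - m) * x ^ (q - n) := by
  have hsplit : q - m = (n - m) + (q - n) := by omega
  rw [hsplit, pow_add, pow_add, mul_assoc, mul_assoc, mul_comm (y ^ (q - n))]
  exact mul_le_mul_of_nonneg_right (pow_le_pow_left₀ hx hxy _)
    (mul_nonneg (pow_nonneg hx _) (pow_nonneg (hx.trans hxy) _))

theorem stmt_10 (q : ℕ) (a b : ℕ → ℝ)
    (ha : ∀ i < q, 0 < a i) (hb : ∀ i < q, 0 < b i)
    (hchain : ∀ m, 1 ≤ m → m ≤ q →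
      esym q (m - 1) b / esym q (m - 1) a ≤ esym q m b / esym q m a) :
    MonotoneOn (fun x : ℝ =>
      (∏ k ∈ Finset.range q, (a k + x)) / (∏ k ∈ Finset.range q, (b k + x)))
      (Set.Ioi 0) := by
  have hratio : MonotoneOn (fun m => esym q m b / esym q m a) (Set.Iic q) :=
    monotoneOn_of_le_succ Set.ordConnected_Iic fun m _ _ hm1 => by
      simpa using hchain (m + 1) (by omega) hm1
  have hcross : ∀ m ∈ range (q + 1), ∀ n ∈ range (q + 1), m ≤ n →
      esym q n a * esym q m b ≤ esym q m a * esym q n b := by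
    intro m hm n hn hmn
    simp only [mem_range] at hm hn
    have := hratio (Set.mem_Iic.2 (by omega)) (Set.mem_Iic.2 (by omega)) hmn
    rwa [div_le_div_iff₀ (esym_pos ha (by omega)) (esym_pos ha (by omega)), mul_comm,
      mul_comm (esym q n b)] at this
  intro x hx y hy hxy
  have hprod_pos : ∀ z ∈ Set.Ioi (0 : ℝ), 0 < ∏ k ∈ range q, (b k + z) := fun z hz =>
    prod_pos fun k hk => add_pos (hb k (mem_range.mp hk)) hz
  rw [div_le_div_iff₀ (hprod_pos x hx) (hprod_pos y hy), prod_add_eq_sum_esym q a,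
    prod_add_eq_sum_esym q a, prod_add_eq_sum_esym q b, prod_add_eq_sum_esym q b]
  refine sum_mul_sum_le_of_cross_le _ _ _ _ _ hcross fun m _ n hn hmn => ?_
  exact pow_sub_mul_pow_sub_le (le_of_lt hx) hxy hmn (by simpa [Nat.lt_succ_iff] using hn)
end

section
/- If b_i > a_i > 0 for each i = 1,…,q, then the chain of inequalities e_q(b)/e_q(a) ≥ e_{q−1}(b)/e_{q−1}(a) ≥ ⋯ ≥ e_1(b)/e_1(a) ≥ 1 holds, where e_m denotes the m-th elementary symmetric polynomial in q variables. -/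
/-!
Cross-multiplied, the claim is `e_n(b) e_{n+1}(a) ≤ e_{n+1}(b) e_n(a)`. Both sides are sums over
pairs `(S, T)` of an `n`-set and an `(n+1)`-set. Group the pairs by `I = S ∩ T` and the symmetric
difference `W`, of odd size `2j+1`; then `T = I ∪ A` with `A` a `(j+1)`-subset of `W`, and the
fibre contributes `(∏_I ab) ∑_A b^{W \ A} a^A` on the left, the same with `a, b` swapped on the
right. After complementing `A`, this compares the sums of `g X = b^X a^{W \ X}` over the `j`- and
the `(j+1)`-subsets of `W`. Since `a ≤ b`, `g` is monotone, and double counting the inclusions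
between the two levels (each `j`-set lies in `j+1` of the `(j+1)`-sets, each `(j+1)`-set contains
`j+1` of the `j`-sets) gives the comparison.
-/

open Finset

section

variable {ι : Type*} [DecidableEq ι]

theorem sum_powersetCard_apply_sdiff {M : Type*} [AddCommMonoid M] {W : Finset ι} {j k : ℕ}
    (hW : #W = j + k) (f : Finset ι → M) :
    ∑ A ∈ W.powersetCard k, f (W \ A) = ∑ B ∈ W.powersetCard j, f B := by
  refine sum_nbij' (W \ ·) (W \ ·) ?_ ?_ ?_ ?_ fun _ _ => rfl
  all_goals intro A hA; simp only [mem_powersetCard] at hA ⊢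
  · exact ⟨sdiff_subset, by rw [card_sdiff_of_subset hA.1, hA.2, hW, Nat.add_sub_cancel]⟩
  · exact ⟨sdiff_subset, by rw [card_sdiff_of_subset hA.1, hA.2, hW, Nat.add_sub_cancel_left]⟩
  · exact Finset.sdiff_sdiff_eq_self hA.1
  · exact Finset.sdiff_sdiff_eq_self hA.1

theorem card_sub_nsmul_sum_powersetCard_le {M : Type*} [AddCommMonoid M] [PartialOrder M]
    [IsOrderedAddMonoid M] {W : Finset ι} {g : Finset ι → M} (hg : MonotoneOn g (Set.Iic W))
    (j : ℕ) :
    (#W - j) • ∑ B ∈ W.powersetCard j, g B ≤ (j + 1) • ∑ A ∈ W.powersetCard (j + 1), g A := by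
  calc (#W - j) • ∑ B ∈ W.powersetCard j, g B
      = ∑ B ∈ W.powersetCard j, ∑ A ∈ (W.powersetCard (j + 1)).bipartiteAbove (· ⊆ ·) B, g B := by
        rw [smul_sum]
        refine sum_congr rfl fun B hB => ?_
        rw [mem_powersetCard] at hB
        rw [sum_const, bipartiteAbove, card_filter_powersetCard_subset _ _ _ hB.1 (by omega), hB.2]
        simp
    _ ≤ ∑ B ∈ W.powersetCard j, ∑ A ∈ (W.powersetCard (j + 1)).bipartiteAbove (· ⊆ ·) B, g A := by
        refine sum_le_sum fun B hB => sum_le_sum fun A hA => ?_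
        rw [mem_bipartiteAbove, mem_powersetCard] at hA
        exact hg (hA.2.trans hA.1.1) hA.1.1 hA.2
    _ = ∑ A ∈ W.powersetCard (j + 1), ∑ B ∈ (W.powersetCard j).bipartiteBelow (· ⊆ ·) A, g A :=
        sum_sum_bipartiteAbove_eq_sum_sum_bipartiteBelow _ _
    _ = (j + 1) • ∑ A ∈ W.powersetCard (j + 1), g A := by
        rw [smul_sum]
        refine sum_congr rfl fun A hA => ?_
        rw [mem_powersetCard] at hA
        have : (W.powersetCard j).bipartiteBelow (· ⊆ ·) A = A.powersetCard j := by
          ext B; simp only [mem_bipartiteBelow, mem_powersetCard]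
          exact ⟨fun h => ⟨h.2, h.1.2⟩, fun h => ⟨⟨h.1.trans hA.1, h.2⟩, h.1⟩⟩
        rw [sum_const, this, card_powersetCard, hA.2, Nat.choose_succ_self_right]

theorem monotoneOn_prod_mul_prod_sdiff {R : Type*} [CommSemiring R] [PartialOrder R]
    [IsOrderedRing R] {W : Finset ι} {a b : ι → R} (ha : ∀ i ∈ W, 0 ≤ a i)
    (hab : ∀ i ∈ W, a i ≤ b i) :
    MonotoneOn (fun X => (∏ i ∈ X, b i) * ∏ i ∈ W \ X, a i) (Set.Iic W) := by
  intro X (hXW : X ⊆ W) Y (hYW : Y ⊆ W) hXY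
  have hb : ∀ i ∈ W, 0 ≤ b i := fun i hi => (ha i hi).trans (hab i hi)
  have hYX : ∀ i ∈ Y \ X, i ∈ W := fun i hi => hYW (mem_sdiff.1 hi).1
  calc (∏ i ∈ X, b i) * ∏ i ∈ W \ X, a i
      = (∏ i ∈ X, b i) * ((∏ i ∈ Y \ X, a i) * ∏ i ∈ W \ Y, a i) := by
        rw [← prod_sdiff (sdiff_subset_sdiff subset_rfl hXY), sdiff_sdiff_sdiff_cancel_left hYW]
    _ ≤ (∏ i ∈ X, b i) * ((∏ i ∈ Y \ X, b i) * ∏ i ∈ W \ Y, a i) := by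
        gcongr with i hi
        · exact prod_nonneg fun i hi => hb i (hXW hi)
        · exact prod_nonneg fun i hi => ha i (mem_sdiff.1 hi).1
        · exact fun i hi => ha i (hYX i hi)
        · exact hab i (hYX i hi)
    _ = (∏ i ∈ Y, b i) * ∏ i ∈ W \ Y, a i := by
        rw [← prod_sdiff hXY]; ring

variable {R : Type*} [CommSemiring R] [LinearOrder R] [IsStrictOrderedRing R]

theorem sum_prod_sdiff_mul_prod_le {W : Finset ι} {a b : ι → R} {j : ℕ} (hW : #W = 2 * j + 1)
    (ha : ∀ i ∈ W, 0 ≤ a i) (hab : ∀ i ∈ W, a i ≤ b i) :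
    ∑ A ∈ W.powersetCard (j + 1), (∏ i ∈ W \ A, b i) * ∏ i ∈ A, a i ≤
      ∑ A ∈ W.powersetCard (j + 1), (∏ i ∈ W \ A, a i) * ∏ i ∈ A, b i := by
  have hcompl : ∑ A ∈ W.powersetCard (j + 1), (∏ i ∈ W \ A, b i) * ∏ i ∈ A, a i =
      ∑ B ∈ W.powersetCard j, (∏ i ∈ B, b i) * ∏ i ∈ W \ B, a i := by
    rw [← sum_powersetCard_apply_sdiff (by omega : #W = j + (j + 1))]
    refine sum_congr rfl fun A hA => ?_
    rw [Finset.sdiff_sdiff_eq_self (mem_powersetCard.1 hA).1]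
  have hdouble := card_sub_nsmul_sum_powersetCard_le (monotoneOn_prod_mul_prod_sdiff ha hab) j
  rw [hW, show 2 * j + 1 - j = j + 1 by omega, nsmul_le_nsmul_iff_right j.succ_ne_zero] at hdouble
  simpa only [hcompl, mul_comm (∏ i ∈ W \ _, a i)] using hdouble

theorem sum_powersetCard_sum_powersetCard_succ {M : Type*} [AddCommMonoid M] (s : Finset ι)
    (n : ℕ) (F : Finset ι → Finset ι → M) :
    ∑ S ∈ s.powersetCard n, ∑ T ∈ s.powersetCard (n + 1), F S T =
      ∑ p ∈ (s.powerset ×ˢ s.powerset).filter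
          (fun p => Disjoint p.1 p.2 ∧ 2 * #p.1 + #p.2 = 2 * n + 1),
        ∑ A ∈ p.2.powersetCard (n + 1 - #p.1), F (p.1 ∪ (p.2 \ A)) (p.1 ∪ A) := by
  rw [← sum_product', sum_sigma']
  refine sum_nbij' (fun p => ⟨(p.1 ∩ p.2, (p.1 ∪ p.2) \ (p.1 ∩ p.2)), p.2 \ p.1⟩)
    (fun e => (e.1.1 ∪ (e.1.2 \ e.2), e.1.1 ∪ e.2)) ?_ ?_ ?_ ?_ ?_
  · rintro ⟨S, T⟩ h
    simp only [mem_product, mem_powersetCard, mem_sigma, mem_filter, mem_powerset] at h ⊢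
    obtain ⟨⟨hS, hSn⟩, hT, hTn⟩ := h
    have hU := card_union_add_card_inter S T
    have hI := card_le_card (inter_subset_left : S ∩ T ⊆ S)
    refine ⟨⟨⟨inter_subset_left.trans hS, sdiff_subset.trans (union_subset hS hT)⟩,
      disjoint_sdiff, ?_⟩, ?_, ?_⟩
    · rw [card_sdiff_of_subset (inter_subset_left.trans subset_union_left)]; omega
    · intro x; simp only [mem_sdiff, mem_union, mem_inter]; tauto
    · rw [card_sdiff, inter_comm]; omega
  · rintro ⟨⟨I, W⟩, A⟩ h
    simp only [mem_product, mem_powersetCard, mem_sigma, mem_filter, mem_powerset] at h ⊢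
    obtain ⟨⟨⟨hI, hW⟩, hIW, hcard⟩, hA, hAn⟩ := h
    have hAW := card_le_card hA
    refine ⟨⟨union_subset hI (sdiff_subset.trans hW), ?_⟩, union_subset hI (hA.trans hW), ?_⟩
    · rw [card_union_of_disjoint (hIW.mono_right sdiff_subset), card_sdiff_of_subset hA]; omega
    · rw [card_union_of_disjoint (hIW.mono_right hA)]; omega
  · rintro ⟨S, T⟩ h
    simp only [Prod.mk.injEq]
    constructor <;> ext x <;> simp only [mem_sdiff, mem_union, mem_inter] <;> tauto
  · rintro ⟨⟨I, W⟩, A⟩ h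
    simp only [mem_product, mem_powersetCard, mem_sigma, mem_filter, mem_powerset] at h
    obtain ⟨⟨⟨hI, hW⟩, hIW, hcard⟩, hA, hAn⟩ := h
    refine Sigma.ext (Prod.ext ?_ ?_) (heq_of_eq ?_) <;> ext x <;>
      simp only [mem_sdiff, mem_union, mem_inter] <;> grind [disjoint_left]
  · rintro ⟨S, T⟩ h
    congr 1 <;> ext x <;> simp only [mem_sdiff, mem_union, mem_inter] <;> tauto

theorem esymm_mul_esymm_succ_le {s : Finset ι} {a b : ι → R} (ha : ∀ i ∈ s, 0 ≤ a i)
    (hab : ∀ i ∈ s, a i ≤ b i) (n : ℕ) :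
    (s.val.map b).esymm n * (s.val.map a).esymm (n + 1) ≤
      (s.val.map b).esymm (n + 1) * (s.val.map a).esymm n := by
  simp only [esymm_map_val]
  rw [sum_mul_sum, mul_comm, sum_mul_sum, sum_powersetCard_sum_powersetCard_succ,
    sum_powersetCard_sum_powersetCard_succ]
  refine sum_le_sum fun ⟨I, W⟩ hp => ?_
  simp only [mem_filter, mem_product, mem_powerset] at hp
  obtain ⟨⟨hI, hW⟩, hIW, hcard⟩ := hp
  have hsplit (x y : ι → R) (A : Finset ι) (hA : A ∈ W.powersetCard (n + 1 - #I)) :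
      (∏ i ∈ I ∪ (W \ A), x i) * ∏ i ∈ I ∪ A, y i =
        ((∏ i ∈ I, x i) * ∏ i ∈ I, y i) * ((∏ i ∈ W \ A, x i) * ∏ i ∈ A, y i) := by
    have hAW := (mem_powersetCard.1 hA).1
    rw [prod_union (hIW.mono_right sdiff_subset), prod_union (hIW.mono_right hAW)]
    ring
  rw [sum_congr rfl (hsplit b a), sum_congr rfl (hsplit a b), ← mul_sum, ← mul_sum,
    mul_comm (∏ i ∈ I, a i)]
  refine mul_le_mul_of_nonneg_left ?_ ?_
  · rw [show n + 1 - #I = n - #I + 1 by omega]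
    exact sum_prod_sdiff_mul_prod_le (by omega) (fun i hi => ha i (hW hi)) fun i hi => hab i (hW hi)
  · exact mul_nonneg (prod_nonneg fun i hi => (ha i (hI hi)).trans (hab i (hI hi)))
      (prod_nonneg fun i hi => ha i (hI hi))

end

theorem esymm_map_pos {ι R : Type*} [CommSemiring R] [PartialOrder R] [IsStrictOrderedRing R]
    {s : Finset ι} {a : ι → R} (ha : ∀ i ∈ s, 0 < a i) {n : ℕ}
    (hn : n ≤ #s) : 0 < (s.val.map a).esymm n := by
  rw [esymm_map_val]
  exact sum_pos (fun t ht => prod_pos fun i hi => ha i ((mem_powersetCard.1 ht).1 hi))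
    (powersetCard_nonempty.2 hn)

theorem stmt_11 (q : ℕ) (a b : ℕ → ℝ)
    (ha : ∀ i < q, 0 < a i) (hab : ∀ i < q, a i < b i) :
    ∀ m, 1 ≤ m → m ≤ q →
      esym q (m - 1) b / esym q (m - 1) a ≤ esym q m b / esym q m a := by
  intro m hm hmq
  obtain ⟨n, rfl⟩ := Nat.exists_eq_add_of_le' hm
  have hesym (c : ℕ → ℝ) (k : ℕ) : esym q k c = ((range q).val.map c).esymm k :=
    (esymm_map_val c _ k).symm
  have ha' (i : ℕ) (hi : i ∈ range q) : 0 < a i := ha i (mem_range.1 hi)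
  simp only [hesym, Nat.add_sub_cancel]
  rw [div_le_div_iff₀ (esymm_map_pos ha' (by rw [card_range]; omega))
    (esymm_map_pos ha' (by rwa [card_range]))]
  exact esymm_mul_esymm_succ_le (fun i hi => (ha' i hi).le)
    (fun i hi => (hab i (mem_range.1 hi)).le) n
end

section
/- For b_1, b_2 > 0 and positive a_1, a_2, the function x ↦ (a_1+x)(a_2+x)/[(b_1+x)(b_2+x)] is increasing on (0,∞) if and only if b_1b_2/(a_1a_2) ≥ (b_1+b_2)/(a_1+a_2) ≥ 1. -/
/-!
Writing `S, P` and `T, Q` for the sum and product of the `aᵢ` and of the `bᵢ`, the quotient rule shows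
that the derivative has the sign of the quadratic `(T - S) x² + 2 (Q - P) x + (Q S - P T)`.
Its nonnegativity on `(0, ∞)` forces the constant coefficient (let `x → 0`) and the leading
coefficient (let `x → ∞`) to be nonnegative, which is the chain condition. Conversely the chain
condition gives `Q S ≥ P T ≥ P S`, hence `Q ≥ P`, so all three coefficients are nonnegative.
-/

open Set

theorem monotoneOn_iff_forall_hasDerivAt_nonneg {f f' : ℝ → ℝ} {s : Set ℝ} (hs : IsOpen s)
    (hconv : Convex ℝ s) (hf : ∀ x ∈ s, HasDerivAt f (f' x) x) :
    MonotoneOn f s ↔ ∀ x ∈ s, 0 ≤ f' x := by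
  constructor
  · intro hmono x hx
    simpa only [derivWithin_of_isOpen hs hx, (hf x hx).deriv] using
      hmono.derivWithin_nonneg (x := x)
  · intro hnonneg
    refine monotoneOn_of_deriv_nonneg hconv
      (fun x hx => (hf x hx).continuousAt.continuousWithinAt) ?_ ?_ <;> rw [hs.interior_eq]
    · exact fun x hx => (hf x hx).differentiableAt.differentiableWithinAt
    · exact fun x hx => (hf x hx).deriv ▸ hnonneg x hx

theorem nonneg_of_continuousAt_of_forall_pos_nonneg {g : ℝ → ℝ} (hg : ContinuousAt g 0)
    (h : ∀ x > 0, 0 ≤ g x) : 0 ≤ g 0 :=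
  ge_of_tendsto (hg.tendsto.mono_left nhdsWithin_le_nhds)
    (eventually_nhdsWithin_of_forall (s := Ioi 0) h)

theorem nonneg_coeffs_of_forall_pos_quadratic_nonneg {c₀ c₁ c₂ : ℝ}
    (h : ∀ x > 0, 0 ≤ c₂ * x ^ 2 + c₁ * x + c₀) : 0 ≤ c₀ ∧ 0 ≤ c₂ := by
  constructor
  · simpa using nonneg_of_continuousAt_of_forall_pos_nonneg (by fun_prop) h
  · -- `c₂` is the value at `0` of the reversed quadratic
    have hrev : ∀ t > 0, 0 ≤ c₀ * t ^ 2 + c₁ * t + c₂ := fun t ht => by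
      have hreflect : c₀ * t ^ 2 + c₁ * t + c₂ = t ^ 2 * (c₂ * t⁻¹ ^ 2 + c₁ * t⁻¹ + c₀) := by
        field_simp
        ring
      exact hreflect ▸ mul_nonneg (sq_nonneg t) (h t⁻¹ (inv_pos.mpr ht))
    simpa using nonneg_of_continuousAt_of_forall_pos_nonneg (by fun_prop) hrev

theorem hasDerivAt_quadratic_ratio (a₁ a₂ b₁ b₂ : ℝ) {x : ℝ} (hx : (b₁ + x) * (b₂ + x) ≠ 0) :
    HasDerivAt (fun x : ℝ => (a₁ + x) * (a₂ + x) / ((b₁ + x) * (b₂ + x)))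
      ((((b₁ + b₂) - (a₁ + a₂)) * x ^ 2 + 2 * (b₁ * b₂ - a₁ * a₂) * x +
        ((a₁ + a₂) * (b₁ * b₂) - a₁ * a₂ * (b₁ + b₂))) / ((b₁ + x) * (b₂ + x)) ^ 2) x := by
  have hlin : ∀ c : ℝ, HasDerivAt (fun x : ℝ => c + x) 1 x := fun c =>
    (hasDerivAt_id x).const_add c
  exact (((hlin a₁).fun_mul (hlin a₂)).fun_div ((hlin b₁).fun_mul (hlin b₂)) hx).congr_deriv
    (by ring)

theorem stmt_12 (a₁ a₂ b₁ b₂ : ℝ) (ha₁ : 0 < a₁) (ha₂ : 0 < a₂)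
    (hb₁ : 0 < b₁) (hb₂ : 0 < b₂) :
    MonotoneOn (fun x : ℝ => (a₁ + x) * (a₂ + x) / ((b₁ + x) * (b₂ + x))) (Set.Ioi 0) ↔
      (1 ≤ (b₁ + b₂) / (a₁ + a₂) ∧ (b₁ + b₂) / (a₁ + a₂) ≤ b₁ * b₂ / (a₁ * a₂)) := by
  have hS : 0 < a₁ + a₂ := by positivity
  have hP : 0 < a₁ * a₂ := by positivity
  rw [one_le_div hS, div_le_div_iff₀ hS hP, monotoneOn_iff_forall_hasDerivAt_nonneg isOpen_Ioi
    (convex_Ioi 0) fun x (hx : 0 < x) => hasDerivAt_quadratic_ratio a₁ a₂ b₁ b₂ (by positivity)]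
  have hden : ∀ x : ℝ, 0 < x → 0 < ((b₁ + x) * (b₂ + x)) ^ 2 := fun x hx => by positivity
  simp only [mem_Ioi]
  constructor
  · intro h
    obtain ⟨hc₀, hc₂⟩ := nonneg_coeffs_of_forall_pos_quadratic_nonneg fun x hx => by
      simpa [le_div_iff₀ (hden x hx)] using h x hx
    constructor <;> linarith
  · rintro ⟨hST, hPT⟩ x hx
    have hPQ : a₁ * a₂ ≤ b₁ * b₂ := by nlinarith
    refine div_nonneg ?_ (hden x hx).le
    have := mul_nonneg (sq_nonneg x) (sub_nonneg.mpr hST)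
    have := mul_nonneg hx.le (sub_nonneg.mpr hPQ)
    nlinarith
end

section
/- Let f(a,x) = Σ_{n≥0} f_n (a)_n x^n/n! with f_n > 0 and f_n/f_{n−1} strictly decreasing. Then for a > 0 and x > 0: a/(a+1) < f(a+2,x) f(a,x) / f(a+1,x)^2 < 1 (direct and reverse Turán-type inequalities). -/
open Finset

lemma poch_zero (a : ℝ) : poch a 0 = 1 := by simp [poch]

lemma poch_succ (a : ℝ) (n : ℕ) : poch a (n + 1) = poch a n * (a + n) :=
  prod_range_succ _ n

lemma poch_pos_s18 {a : ℝ} (ha : 0 < a) (n : ℕ) : 0 < poch a n :=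
  prod_pos fun i _ => by positivity

lemma mul_poch_add_one (a : ℝ) (n : ℕ) : a * poch (a + 1) n = poch a n * (a + n) := by
  induction n with
  | zero => simp [poch_zero]
  | succ n ih =>
    rw [poch_succ, poch_succ]
    push_cast
    linear_combination (a + 1 + n) * ih

lemma poch_add_one {a : ℝ} (ha : a ≠ 0) (n : ℕ) : poch (a + 1) n = poch a n * (a + n) / a := by
  rw [eq_div_iff ha, mul_comm, mul_poch_add_one]

lemma poch_add_two {a : ℝ} (ha : a ≠ 0) (ha₁ : a + 1 ≠ 0) (n : ℕ) :
    poch (a + 2) n = poch a n * ((a + n) * (a + n + 1)) / (a * (a + 1)) := by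
  rw [show a + 2 = a + 1 + 1 by ring, poch_add_one ha₁, poch_add_one ha]
  field_simp
  ring

lemma sum_antidiagonal_choose_mul_poch (b c : ℝ) (m : ℕ) :
    ∑ p ∈ antidiagonal m, (m.choose p.1 : ℝ) * (poch b p.1 * poch c p.2) = poch (b + c) m := by
  induction m with
  | zero => simp [poch_zero]
  | succ m ih =>
    rw [sum_antidiagonal_choose_succ_mul (fun i j => poch b i * poch c j), ← sum_add_distrib,
      poch_succ, ← ih, sum_mul]
    refine sum_congr rfl fun p hp => ?_
    rw [HasAntidiagonal.mem_antidiagonal] at hp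
    rw [Nat.choose_symm_of_eq_add hp.symm, poch_succ, poch_succ, ← hp]
    push_cast
    ring

theorem Finset.sum_mul_nonpos_of_sum_eq_zero {ι : Type*} {s : Finset ι} {t c : ι → ℝ}
    (hc : ∑ i ∈ s, c i = 0) (hsep : ∀ i ∈ s, ∀ j ∈ s, c i ≤ 0 → 0 < c j → t j ≤ t i) :
    ∑ i ∈ s, t i * c i ≤ 0 := by
  by_cases hpos : (s.filter (0 < c ·)).Nonempty
  · obtain ⟨j₀, hj₀, hmax⟩ := exists_max_image _ t hpos
    rw [mem_filter] at hj₀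
    -- `t j₀` separates the values of `t` where `c > 0` from those where `c ≤ 0`.
    have hshift : ∑ i ∈ s, t i * c i = ∑ i ∈ s, (t i - t j₀) * c i := by
      simp only [sub_mul, sum_sub_distrib, ← mul_sum, hc, mul_zero, sub_zero]
    rw [hshift]
    refine sum_nonpos fun i hi => ?_
    rcases le_or_gt (c i) 0 with hci | hci
    · exact mul_nonpos_of_nonneg_of_nonpos (sub_nonneg.2 (hsep i hi j₀ hj₀.1 hci hj₀.2)) hci
    · exact mul_nonpos_of_nonpos_of_nonneg (sub_nonpos.2 (hmax i (mem_filter.2 ⟨hi, hci⟩))) hci.le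
  · have hnonpos : ∀ i ∈ s, c i ≤ 0 := fun i hi =>
      not_lt.1 fun hci => hpos ⟨i, mem_filter.2 ⟨hi, hci⟩⟩
    rw [sum_eq_zero_iff_of_nonpos hnonpos] at hc
    exact (sum_eq_zero fun i hi => by rw [hc i hi, mul_zero]).le

lemma mul_apply_add_le_of_antitone_ratio {f : ℕ → ℝ} (hf : ∀ n, 0 < f n)
    (hr : Antitone fun n => f (n + 1) / f n) {k l : ℕ} (hkl : k ≤ l) (n : ℕ) :
    f k * f (l + n) ≤ f (k + n) * f l := by
  induction n with
  | zero => simp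
  | succ n ih =>
    have hstep : ∀ i, f (i + 1) = f i * (f (i + 1) / f i) := fun i =>
      (mul_div_cancel₀ _ (hf i).ne').symm
    rw [← add_assoc, ← add_assoc, hstep (l + n), hstep (k + n)]
    calc f k * (f (l + n) * (f (l + n + 1) / f (l + n)))
        = f k * f (l + n) * (f (l + n + 1) / f (l + n)) := by ring
      _ ≤ f (k + n) * f l * (f (l + n + 1) / f (l + n)) :=
        mul_le_mul_of_nonneg_right ih (div_pos (hf _) (hf _)).le
      _ ≤ f (k + n) * f l * (f (k + n + 1) / f (k + n)) :=
        mul_le_mul_of_nonneg_left (hr (by omega)) (mul_pos (hf _) (hf _)).le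
      _ = _ := by ring

lemma apply_mul_apply_le_of_sq_sub_le {f : ℕ → ℝ} (hf : ∀ n, 0 < f n)
    (hr : Antitone fun n => f (n + 1) / f n) {p q : ℕ × ℕ} (hpq : p.1 + p.2 = q.1 + q.2)
    (hsq : ((p.1 : ℝ) - p.2) ^ 2 ≤ ((q.1 : ℝ) - q.2) ^ 2) :
    f q.1 * f q.2 ≤ f p.1 * f p.2 := by
  have central : ∀ i j k l : ℕ, i ≤ j → k ≤ l → i + j = k + l →
      ((i : ℝ) - j) ^ 2 ≤ ((k : ℝ) - l) ^ 2 → f k * f l ≤ f i * f j := by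
    intro i j k l hij hkl hsum hsq
    have hki : (k : ℝ) ≤ i := by
      have hsum' : (i : ℝ) + j = k + l := by exact_mod_cast hsum
      have hij' : (i : ℝ) ≤ j := by exact_mod_cast hij
      have hkl' : (k : ℝ) ≤ l := by exact_mod_cast hkl
      nlinarith
    obtain ⟨d, rfl⟩ := Nat.exists_eq_add_of_le (show k ≤ i by exact_mod_cast hki)
    obtain rfl : l = j + d := by omega
    exact mul_apply_add_le_of_antitone_ratio hf hr (by omega) d
  obtain ⟨i, j⟩ := p
  obtain ⟨k, l⟩ := q
  dsimp only at *
  rcases le_total i j with hij | hji <;> rcases le_total k l with hkl | hlk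
  · exact central i j k l hij hkl hpq hsq
  · rw [mul_comm (f k)]; exact central i j l k hij hlk (by omega) (by linarith)
  · rw [mul_comm (f i)]; exact central j i k l hji hkl (by omega) (by linarith)
  · rw [mul_comm (f k), mul_comm (f i)]; exact central j i l k hji hlk (by omega) (by linarith)

-- The theorem's series `∑ fₙ (c)ₙ xⁿ / n!` is `∑ pochTerm (fun n => fₙ xⁿ) c n`.
noncomputable def pochTerm (g : ℕ → ℝ) (c : ℝ) (n : ℕ) : ℝ := g n * poch c n / n.factorial

lemma pochTerm_zero (g : ℕ → ℝ) (c : ℝ) : pochTerm g c 0 = g 0 := by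
  simp [pochTerm, poch_zero]

lemma pochTerm_pos {g : ℕ → ℝ} (hg : ∀ n, 0 < g n) {c : ℝ} (hc : 0 < c) (n : ℕ) :
    0 < pochTerm g c n :=
  div_pos (mul_pos (hg n) (poch_pos_s18 hc n)) (Nat.cast_pos.2 n.factorial_pos)

lemma sum_antidiagonal_pochTerm_one (b c : ℝ) (m : ℕ) :
    ∑ p ∈ antidiagonal m, pochTerm 1 b p.1 * pochTerm 1 c p.2 = pochTerm 1 (b + c) m := by
  rw [pochTerm, ← sum_antidiagonal_choose_mul_poch, Pi.one_apply, one_mul, sum_div]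
  refine sum_congr rfl fun ⟨i, j⟩ hij => ?_
  rw [HasAntidiagonal.mem_antidiagonal] at hij
  subst hij
  rw [← Nat.add_choose_mul_factorial_mul_factorial, Nat.choose_symm_add]
  have hchoose : ((i + j).choose j : ℝ) ≠ 0 :=
    Nat.cast_ne_zero.2 (Nat.choose_pos (j.le_add_left i)).ne'
  simp only [pochTerm, Pi.one_apply, one_mul, Nat.cast_mul]
  field_simp

lemma sum_antidiagonal_mul_comm (u v : ℕ → ℝ) (m : ℕ) :
    ∑ p ∈ antidiagonal m, u p.1 * v p.2 = ∑ p ∈ antidiagonal m, v p.1 * u p.2 := by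
  rw [← Finset.Nat.sum_antidiagonal_swap]
  simp only [Prod.fst_swap, Prod.snd_swap, mul_comm]

lemma two_mul_sum_antidiagonal_pochTerm (g : ℕ → ℝ) (b c : ℝ) (m : ℕ) :
    2 * ∑ p ∈ antidiagonal m, pochTerm g b p.1 * pochTerm g c p.2
      = ∑ p ∈ antidiagonal m, (pochTerm g b p.1 * pochTerm g c p.2
          + pochTerm g c p.1 * pochTerm g b p.2) := by
  rw [sum_add_distrib, ← sum_antidiagonal_mul_comm, two_mul]

lemma pochTerm_upper_identity (g : ℕ → ℝ) {a : ℝ} (ha : 0 < a) (i j : ℕ) :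
    2 * a ^ 2 * (a + 1) * (pochTerm g a i * pochTerm g (a + 2) j
      + pochTerm g (a + 2) i * pochTerm g a j - 2 * (pochTerm g (a + 1) i * pochTerm g (a + 1) j))
    = g i * g j * (pochTerm 1 a i * pochTerm 1 a j) *
      ((2 * a + 1) * ((i : ℝ) - j) ^ 2 - (2 * a + i + j) * (i + j)) := by
  simp only [pochTerm, poch_add_one ha.ne', poch_add_two ha.ne' (by linarith : a + 1 ≠ 0),
    Pi.one_apply]
  field_simp
  ring

lemma pochTerm_lower_identity (g : ℕ → ℝ) {a : ℝ} (ha : 0 < a) (i j : ℕ) :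
    a * ((a + 1) * (pochTerm g a i * pochTerm g (a + 2) j + pochTerm g (a + 2) i * pochTerm g a j)
      - 2 * a * (pochTerm g (a + 1) i * pochTerm g (a + 1) j))
    = g i * g j * (pochTerm 1 a i * pochTerm 1 a j) * (((i : ℝ) - j) ^ 2 + 2 * a + i + j) := by
  simp only [pochTerm, poch_add_one ha.ne', poch_add_two ha.ne' (by linarith : a + 1 ≠ 0),
    Pi.one_apply]
  field_simp
  ring

lemma four_mul_sum_antidiagonal_pochTerm_sub (g : ℕ → ℝ) {a : ℝ} (ha : 0 < a) (m : ℕ) :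
    4 * a ^ 2 * (a + 1) *
      (∑ p ∈ antidiagonal m, pochTerm g a p.1 * pochTerm g (a + 2) p.2
        - ∑ p ∈ antidiagonal m, pochTerm g (a + 1) p.1 * pochTerm g (a + 1) p.2)
      = ∑ p ∈ antidiagonal m, g p.1 * g p.2 * (pochTerm 1 a p.1 * pochTerm 1 a p.2 *
          ((2 * a + 1) * ((p.1 : ℝ) - p.2) ^ 2 - (2 * a + p.1 + p.2) * (p.1 + p.2))) := by
  have hpoint : ∑ p ∈ antidiagonal m, g p.1 * g p.2 * (pochTerm 1 a p.1 * pochTerm 1 a p.2 *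
        ((2 * a + 1) * ((p.1 : ℝ) - p.2) ^ 2 - (2 * a + p.1 + p.2) * (p.1 + p.2)))
      = 2 * a ^ 2 * (a + 1) * (∑ p ∈ antidiagonal m, (pochTerm g a p.1 * pochTerm g (a + 2) p.2
          + pochTerm g (a + 2) p.1 * pochTerm g a p.2)
        - 2 * ∑ p ∈ antidiagonal m, pochTerm g (a + 1) p.1 * pochTerm g (a + 1) p.2) := by
    rw [mul_sum, ← sum_sub_distrib, mul_sum]
    refine sum_congr rfl fun p _ => ?_
    rw [pochTerm_upper_identity g ha]
    ring
  rw [hpoint, ← two_mul_sum_antidiagonal_pochTerm]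
  ring

lemma sum_antidiagonal_pochTerm_upper {g : ℕ → ℝ} (hg : ∀ n, 0 < g n)
    (hr : Antitone fun n => g (n + 1) / g n) {a : ℝ} (ha : 0 < a) (m : ℕ) :
    ∑ p ∈ antidiagonal m, pochTerm g a p.1 * pochTerm g (a + 2) p.2
      ≤ ∑ p ∈ antidiagonal m, pochTerm g (a + 1) p.1 * pochTerm g (a + 1) p.2 := by
  have hsym := fun h : ℕ → ℝ => four_mul_sum_antidiagonal_pochTerm_sub h ha m
  set κ : ℕ × ℕ → ℝ := fun p => pochTerm 1 a p.1 * pochTerm 1 a p.2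
  set Q : ℕ × ℕ → ℝ := fun p =>
    (2 * a + 1) * ((p.1 : ℝ) - p.2) ^ 2 - (2 * a + p.1 + p.2) * (p.1 + p.2)
  have hzero : ∑ p ∈ antidiagonal m, κ p * Q p = 0 := by
    have := hsym 1
    simp only [sum_antidiagonal_pochTerm_one, Pi.one_apply, one_mul] at this
    rw [← this, show a + (a + 2) = a + 1 + (a + 1) by ring, sub_self, mul_zero]
  -- On a fixed antidiagonal `Q` increases with `(i - j)²`, while `gᵢ gⱼ` decreases with it.
  have hsep : ∀ p ∈ antidiagonal m, ∀ q ∈ antidiagonal m, κ p * Q p ≤ 0 → 0 < κ q * Q q →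
      g q.1 * g q.2 ≤ g p.1 * g p.2 := by
    intro p hp q hq hpneg hqpos
    rw [HasAntidiagonal.mem_antidiagonal] at hp hq
    have hκ : ∀ r, 0 < κ r := fun r =>
      mul_pos (pochTerm_pos (fun _ => one_pos) ha _) (pochTerm_pos (fun _ => one_pos) ha _)
    have hQ : Q p < Q q :=
      (nonpos_of_mul_nonpos_right hpneg (hκ p)).trans_lt (pos_of_mul_pos_right hqpos (hκ q).le)
    refine apply_mul_apply_le_of_sq_sub_le hg hr (hp.trans hq.symm) ?_
    have hm : (p.1 : ℝ) + p.2 = q.1 + q.2 := by exact_mod_cast hp.trans hq.symm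
    simp only [Q, hm] at hQ
    nlinarith
  have hmain := sum_mul_nonpos_of_sum_eq_zero hzero hsep
  rw [← hsym g] at hmain
  linarith [nonpos_of_mul_nonpos_right hmain (by positivity : (0 : ℝ) < 4 * a ^ 2 * (a + 1))]

lemma sum_antidiagonal_pochTerm_lower {g : ℕ → ℝ} (hg : ∀ n, 0 < g n) {a : ℝ} (ha : 0 < a)
    (m : ℕ) :
    a * ∑ p ∈ antidiagonal m, pochTerm g (a + 1) p.1 * pochTerm g (a + 1) p.2
      ≤ (a + 1) * ∑ p ∈ antidiagonal m, pochTerm g a p.1 * pochTerm g (a + 2) p.2 := by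
  have hpoint : ∑ p ∈ antidiagonal m, g p.1 * g p.2 * (pochTerm 1 a p.1 * pochTerm 1 a p.2)
        * (((p.1 : ℝ) - p.2) ^ 2 + 2 * a + p.1 + p.2)
      = a * ((a + 1) * ∑ p ∈ antidiagonal m, (pochTerm g a p.1 * pochTerm g (a + 2) p.2
            + pochTerm g (a + 2) p.1 * pochTerm g a p.2)
          - 2 * a * ∑ p ∈ antidiagonal m, pochTerm g (a + 1) p.1 * pochTerm g (a + 1) p.2) := by
    rw [mul_sum, mul_sum, ← sum_sub_distrib, mul_sum]
    exact sum_congr rfl fun p _ => (pochTerm_lower_identity g ha p.1 p.2).symm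
  have hnonneg : 0 ≤ ∑ p ∈ antidiagonal m, g p.1 * g p.2 * (pochTerm 1 a p.1 * pochTerm 1 a p.2)
      * (((p.1 : ℝ) - p.2) ^ 2 + 2 * a + p.1 + p.2) := by
    refine sum_nonneg fun p _ => mul_nonneg (mul_pos (mul_pos (hg _) (hg _)) (mul_pos ?_ ?_)).le
      (by positivity)
    all_goals exact pochTerm_pos (fun _ => one_pos) ha _
  rw [hpoint, ← two_mul_sum_antidiagonal_pochTerm] at hnonneg
  linarith [nonneg_of_mul_nonneg_right hnonneg ha]

lemma sum_antidiagonal_two_pochTerm_sub (g : ℕ → ℝ) (a : ℝ) :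
    ∑ p ∈ antidiagonal 2, pochTerm g (a + 1) p.1 * pochTerm g (a + 1) p.2
      - ∑ p ∈ antidiagonal 2, pochTerm g a p.1 * pochTerm g (a + 2) p.2 = g 1 ^ 2 - g 0 * g 2 := by
  simp only [pochTerm, poch, Nat.sum_antidiagonal_succ, range_zero, prod_empty, mul_one,
    Nat.factorial, Nat.cast_one, div_one, Nat.reduceAdd, prod_range_succ, range_one,
    prod_singleton, CharP.cast_eq_zero, add_zero, Nat.succ_eq_add_one, zero_add, Nat.cast_ofNat,
    Nat.cast_mul, Nat.cast_add, one_mul, HasAntidiagonal.antidiagonal_zero, sum_singleton]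
  ring

lemma tsum_mul_tsum_lt_of_sum_antidiagonal {p q r s : ℕ → ℝ} (hp : Summable p)
    (hq : Summable q) (hr : Summable r) (hs : Summable s)
    (hle : ∀ m, ∑ x ∈ antidiagonal m, p x.1 * q x.2 ≤ ∑ x ∈ antidiagonal m, r x.1 * s x.2)
    {m₀ : ℕ} (hlt : ∑ x ∈ antidiagonal m₀, p x.1 * q x.2 < ∑ x ∈ antidiagonal m₀, r x.1 * s x.2) :
    (∑' n, p n) * (∑' n, q n) < (∑' n, r n) * (∑' n, s n) := by
  rw [tsum_mul_tsum_eq_tsum_sum_antidiagonal_of_summable_norm hp.norm hq.norm,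
    tsum_mul_tsum_eq_tsum_sum_antidiagonal_of_summable_norm hr.norm hs.norm]
  exact Summable.tsum_lt_tsum hle hlt
    (summable_norm_sum_mul_antidiagonal_of_summable_norm hp.norm hq.norm).of_norm
    (summable_norm_sum_mul_antidiagonal_of_summable_norm hr.norm hs.norm).of_norm

lemma tsum_pochTerm_turan_lower {g : ℕ → ℝ} (hg : ∀ n, 0 < g n) {a : ℝ} (ha : 0 < a)
    (h₀ : Summable (pochTerm g a)) (h₁ : Summable (pochTerm g (a + 1)))
    (h₂ : Summable (pochTerm g (a + 2))) :
    a * ((∑' n, pochTerm g (a + 1) n) * ∑' n, pochTerm g (a + 1) n)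
      < (a + 1) * ((∑' n, pochTerm g a n) * ∑' n, pochTerm g (a + 2) n) := by
  have key := tsum_mul_tsum_lt_of_sum_antidiagonal (h₁.mul_left a) h₁ (h₀.mul_left (a + 1)) h₂
    (fun m => by simpa only [mul_assoc, ← mul_sum] using sum_antidiagonal_pochTerm_lower hg ha m)
    (m₀ := 0) (by
      simp only [Finset.Nat.antidiagonal_zero, sum_singleton, pochTerm_zero]
      nlinarith [hg 0])
  simpa only [tsum_mul_left, mul_assoc] using key

lemma tsum_pochTerm_turan_upper {g : ℕ → ℝ} (hg : ∀ n, 0 < g n)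
    (hgr : ∀ n, g (n + 2) / g (n + 1) < g (n + 1) / g n) {a : ℝ} (ha : 0 < a)
    (h₀ : Summable (pochTerm g a)) (h₁ : Summable (pochTerm g (a + 1)))
    (h₂ : Summable (pochTerm g (a + 2))) :
    (∑' n, pochTerm g a n) * (∑' n, pochTerm g (a + 2) n)
      < (∑' n, pochTerm g (a + 1) n) * ∑' n, pochTerm g (a + 1) n := by
  have hlogconcave : g 0 * g 2 < g 1 ^ 2 := by
    have := hgr 0
    rw [div_lt_div_iff₀ (hg 1) (hg 0)] at this
    linarith
  refine tsum_mul_tsum_lt_of_sum_antidiagonal h₀ h₂ h₁ h₁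
    (sum_antidiagonal_pochTerm_upper hg (antitone_nat_of_succ_le fun n => (hgr n).le) ha)
    (m₀ := 2) ?_
  linarith [sum_antidiagonal_two_pochTerm_sub g a]

theorem stmt_18 (f : ℕ → ℝ) (hf : ∀ n, 0 < f n)
    (hratio : ∀ n : ℕ, f (n + 2) / f (n + 1) < f (n + 1) / f n)
    (a x : ℝ) (ha : 0 < a) (hx : 0 < x)
    (hconv : ∀ c : ℝ, 0 < c → Summable (fun n : ℕ => f n * poch c n * x ^ n / n.factorial)) :
    a / (a + 1) <
      (∑' n : ℕ, f n * poch (a + 2) n * x ^ n / n.factorial) *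
        (∑' n : ℕ, f n * poch a n * x ^ n / n.factorial) /
      (∑' n : ℕ, f n * poch (a + 1) n * x ^ n / n.factorial) ^ 2 ∧
    (∑' n : ℕ, f n * poch (a + 2) n * x ^ n / n.factorial) *
        (∑' n : ℕ, f n * poch a n * x ^ n / n.factorial) /
      (∑' n : ℕ, f n * poch (a + 1) n * x ^ n / n.factorial) ^ 2 < 1 := by
  set g : ℕ → ℝ := fun n => f n * x ^ n
  have hterm : ∀ c, (fun n : ℕ => f n * poch c n * x ^ n / n.factorial) = pochTerm g c :=
    fun c => funext fun n => by simp only [pochTerm, g]; ring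
  have hg : ∀ n, 0 < g n := fun n => mul_pos (hf n) (pow_pos hx n)
  have hgr : ∀ n, g (n + 2) / g (n + 1) < g (n + 1) / g n := by
    have hshift : ∀ n, g (n + 1) / g n = x * (f (n + 1) / f n) := fun n => by
      simp only [g]; field_simp [(hf n).ne']; ring
    exact fun n => by rw [hshift, hshift]; exact mul_lt_mul_of_pos_left (hratio n) hx
  have hs : ∀ c, 0 < c → Summable (pochTerm g c) := fun c hc => hterm c ▸ hconv c hc
  have hs₀ := hs a ha
  have hs₁ := hs (a + 1) (by linarith)
  have hs₂ := hs (a + 2) (by linarith)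
  have hpos : 0 < ∑' n, pochTerm g (a + 1) n :=
    hs₁.tsum_pos (fun n => (pochTerm_pos hg (by linarith) n).le) 0
      (pochTerm_pos hg (by linarith) 0)
  simp only [hterm]
  constructor
  · rw [div_lt_div_iff₀ (by linarith) (by positivity)]
    linarith [tsum_pochTerm_turan_lower hg ha hs₀ hs₁ hs₂]
  · rw [div_lt_one (by positivity)]
    linarith [tsum_pochTerm_turan_upper hg hgr ha hs₀ hs₁ hs₂]
end
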